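/- Let f : ℝ → ℝ and φ : ℝ → ℝ be bijections, let α ∈ ℝ, define ψ(a,b) = φ⁻¹(φ(a) + φ(b)) and ρ = f ∘ φ⁻¹ (which is a bijection with inverse φ ∘ f⁻¹). Suppose that for every c ∈ ℝ, every n ≥ 1, and every tuple y₁,…,yₙ of real numbers, ρ⁻¹(n^(α−1) · ∑_{i=1}^{n} ρ(c + yᵢ)) = ρ⁻¹(n^(α−1) · ∑_{i=1}^{n} ρ(yᵢ)) + c. Then ψ satisfies the generalised distributive property for the augmented f-mean with parameters ⟨f, α, 0⟩: for every c ∈ ℝ, every n ≥ 1, and every tuple x₁,…,xₙ of real numbers, ψ(c, f⁻¹(n^(α−1) · ∑_{i=1}^{n} f(xᵢ))) = f⁻¹(n^(α−1) · ∑_{i=1}^{n} f(ψ(c, xᵢ))). -/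
import Mathlib


/-- If ρ = f ∘ φ⁻¹ satisfies the translation condition
ρ⁻¹(n^(α−1) ∑ ρ(c + yᵢ)) = ρ⁻¹(n^(α−1) ∑ ρ(yᵢ)) + c, then the binary operator
ψ(a,b) = φ⁻¹(φ(a)+φ(b)) satisfies the generalised distributive property for the
augmented f-mean with parameters ⟨f, α, 0⟩. -/
theorem genagg_distributive_of_translation
    (f finv φ φinv : ℝ → ℝ)
    (hf : Function.Bijective f) (hφ : Function.Bijective φ)
    (hfleft : Function.LeftInverse finv f) (hfright : Function.RightInverse finv f)
    (hφleft : Function.LeftInverse φinv φ) (hφright : Function.RightInverse φinv φ)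
    (α : ℝ)
    (ψ : ℝ → ℝ → ℝ) (hψ : ∀ a b, ψ a b = φinv (φ a + φ b))
    (ρ ρinv : ℝ → ℝ) (hρ : ρ = f ∘ φinv) (hρinv : ρinv = φ ∘ finv)
    (hcond : ∀ (c : ℝ) (n : ℕ), 1 ≤ n → ∀ y : Fin n → ℝ,
      ρinv ((n : ℝ) ^ (α - 1) * ∑ i, ρ (c + y i))
        = ρinv ((n : ℝ) ^ (α - 1) * ∑ i, ρ (y i)) + c) :
    ∀ (c : ℝ) (n : ℕ), 1 ≤ n → ∀ x : Fin n → ℝ,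
      ψ c (finv ((n : ℝ) ^ (α - 1) * ∑ i, f (x i)))
        = finv ((n : ℝ) ^ (α - 1) * ∑ i, f (ψ c (x i))) := by
  intro c n hn x
  have key := hcond (φ c) n hn (fun i => φ (x i))
  subst hρ hρinv
  simp only [Function.comp_apply] at key
  have h1 : ∀ i, f (φinv (φ c + φ (x i))) = f (ψ c (x i)) := by
    intro i; rw [hψ]
  have h2 : ∀ i, f (φinv (φ (x i))) = f (x i) := by
    intro i; rw [hφleft]
  simp only [h1, h2] at key
  have := congrArg φinv key
  rw [hφleft] at this
  rw [hψ, this, add_comm]
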